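/- arXiv:2208.03082 — 7 statements merged into one kernel-verified Lean document; each statement's English description precedes it below -/
import Mathlib

section
/- If two players' probabilistic preferences A_i and B_i over N options all satisfy A_i + B_i ≤ 1, then there exists an N×N matrix P with nonnegative entries, zero diagonal, and total sum 1, such that the i-th row sum equals A_i and the j-th column sum equals B_j for all i, j. -/
/-!
Lay the masses `A i` as consecutive arcs `I i` of a circle of circumference 1, lay the `B j`
likewise as arcs `J j`, rotate the second family by some `θ`, and let `P i j` be the length of
`I i ∩ (J j + θ)`. The rows and columns of `P` sum to `A` and `B` whatever `θ` is, and `P i i = 0`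
as soon as `J i + θ` lies in the complement of `I i`, an arc of length `1 - A i ≥ B i`. In terms of
the cumulative sums `a`, `c` this asks `θ ∈ [a (i+1) - c i, a i + 1 - c (i+1)]` for every `i`;
the intervals for `k` and `i` meet (for `k ≠ i` by monotonicity, for `k = i` by `A i + B i ≤ 1`),
so a common `θ` exists.
-/

open Finset

def intervalOverlap (u v x y : ℝ) : ℝ := max 0 (min v y - max u x)

section intervalOverlap

variable {u v x y : ℝ}

lemma intervalOverlap_nonneg : 0 ≤ intervalOverlap u v x y := le_max_left _ _

lemma intervalOverlap_comm : intervalOverlap u v x y = intervalOverlap x y u v := by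
  rw [intervalOverlap, intervalOverlap, min_comm v, max_comm u]

lemma intervalOverlap_eq_zero_of_le (h : v ≤ x) : intervalOverlap u v x y = 0 :=
  max_eq_left (by linarith [min_le_left v y, le_max_right u x])

lemma intervalOverlap_eq_zero_of_le' (h : y ≤ u) : intervalOverlap u v x y = 0 := by
  rw [intervalOverlap_comm, intervalOverlap_eq_zero_of_le h]

lemma intervalOverlap_eq_sub (huv : u ≤ v) (hxy : x ≤ y) :
    intervalOverlap u v x y = max u (min v y) - max u (min v x) := by
  unfold intervalOverlap
  rcases le_total y u with h1 | h1 <;> rcases le_total x u with h2 | h2 <;>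
    rcases le_total y v with h3 | h3 <;> rcases le_total x v with h4 | h4 <;>
    simp [max_def, min_def] <;> split_ifs <;> linarith

lemma sum_intervalOverlap (huv : u ≤ v) {x : ℕ → ℝ} (hx : Monotone x) (n : ℕ) :
    ∑ j ∈ range n, intervalOverlap u v (x j) (x (j + 1)) =
      max u (min v (x n)) - max u (min v (x 0)) := by
  rw [← sum_range_sub (fun t => max u (min v (x t)))]
  exact sum_congr rfl fun j _ => intervalOverlap_eq_sub huv (hx j.le_succ)

lemma sum_intervalOverlap' (hxy : x ≤ y) {u : ℕ → ℝ} (hu : Monotone u) (n : ℕ) :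
    ∑ i ∈ range n, intervalOverlap (u i) (u (i + 1)) x y =
      max x (min y (u n)) - max x (min y (u 0)) := by
  simp_rw [intervalOverlap_comm (u := u _)]
  exact sum_intervalOverlap hxy hu n

end intervalOverlap

structure IsCDF (a : ℕ → ℝ) (N : ℕ) : Prop where
  mono : Monotone a
  zero : a 0 = 0
  eq_one : a N = 1

namespace IsCDF

variable {a : ℕ → ℝ} {N : ℕ}

lemma nonneg (ha : IsCDF a N) (m : ℕ) : 0 ≤ a m :=
  ha.zero ▸ ha.mono m.zero_le

lemma le_one (ha : IsCDF a N) {m : ℕ} (hm : m ≤ N) : a m ≤ 1 :=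
  ha.eq_one ▸ ha.mono hm

lemma pos (ha : IsCDF a N) : 0 < N := by
  refine Nat.pos_of_ne_zero fun hN => ?_
  have := ha.eq_one
  rw [hN, ha.zero] at this
  exact zero_ne_one this

end IsCDF

section circularCoupling

variable {a c : ℕ → ℝ} {N : ℕ} {θ : ℝ}

/-- `I i = [a i, a (i+1)]` and the rotated `J j + θ = [θ + c j, θ + c (j+1)]` live on `ℝ / ℤ`;
for `θ ∈ [0, 1]` their overlap there is seen on the two unrolled copies `I i` and `I i + 1`. -/
def circularCoupling (a c : ℕ → ℝ) (θ : ℝ) (i j : ℕ) : ℝ :=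
  intervalOverlap (a i) (a (i + 1)) (θ + c j) (θ + c (j + 1)) +
    intervalOverlap (a i + 1) (a (i + 1) + 1) (θ + c j) (θ + c (j + 1))

lemma circularCoupling_nonneg (i j : ℕ) : 0 ≤ circularCoupling a c θ i j :=
  add_nonneg intervalOverlap_nonneg intervalOverlap_nonneg

lemma circularCoupling_self (i : ℕ) (h₁ : a (i + 1) ≤ θ + c i) (h₂ : θ + c (i + 1) ≤ a i + 1) :
    circularCoupling a c θ i i = 0 := by
  rw [circularCoupling, intervalOverlap_eq_zero_of_le h₁, intervalOverlap_eq_zero_of_le' h₂,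
    add_zero]

lemma sum_circularCoupling_row (ha : IsCDF a N) (hc : IsCDF c N) (hθ₀ : 0 ≤ θ) (hθ₁ : θ ≤ 1)
    {i : ℕ} (hi : i < N) :
    ∑ j ∈ range N, circularCoupling a c θ i j = a (i + 1) - a i := by
  have hmono : a i ≤ a (i + 1) := ha.mono i.le_succ
  have hx : Monotone fun j => θ + c j := hc.mono.const_add θ
  simp only [circularCoupling]
  rw [sum_add_distrib, sum_intervalOverlap hmono hx, sum_intervalOverlap (by linarith) hx,
    hc.eq_one, hc.zero, add_zero]
  have h_top : max (a i) (min (a (i + 1)) (θ + 1)) = a (i + 1) := by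
    rw [min_eq_left (by linarith [ha.le_one hi]), max_eq_right hmono]
  have h_bot : max (a i + 1) (min (a (i + 1) + 1) θ) = a i + 1 :=
    max_eq_left ((min_le_right _ _).trans (by linarith [ha.nonneg i]))
  rw [h_top, h_bot, min_add_add_right, max_add_add_right]
  ring

lemma sum_circularCoupling_col (ha : IsCDF a N) (hc : IsCDF c N) (hθ₀ : 0 ≤ θ) (hθ₁ : θ ≤ 1)
    {j : ℕ} (hj : j < N) :
    ∑ i ∈ range N, circularCoupling a c θ i j = c (j + 1) - c j := by
  have hmono : θ + c j ≤ θ + c (j + 1) := by linarith [hc.mono j.le_succ]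
  simp only [circularCoupling]
  rw [sum_add_distrib, sum_intervalOverlap' hmono ha.mono,
    sum_intervalOverlap' hmono (ha.mono.add_const 1), ha.eq_one, ha.zero, zero_add]
  have h_top : max (θ + c j) (min (θ + c (j + 1)) (1 + 1)) = θ + c (j + 1) := by
    rw [min_eq_left (by linarith [hc.le_one hj]), max_eq_right hmono]
  have h_bot : max (θ + c j) (min (θ + c (j + 1)) 0) = θ + c j :=
    max_eq_left ((min_le_right _ _).trans (by linarith [hc.nonneg j]))
  rw [h_top, h_bot]
  ring

end circularCoupling

lemma exists_rotation {a c : ℕ → ℝ} {N : ℕ} (ha : IsCDF a N) (hc : IsCDF c N)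
    (hS : ∀ k < N, a (k + 1) - a k + (c (k + 1) - c k) ≤ 1) :
    ∃ θ : ℝ, 0 ≤ θ ∧ θ ≤ 1 ∧ ∀ i < N, a (i + 1) ≤ θ + c i ∧ θ + c (i + 1) ≤ a i + 1 := by
  have hne : (range N).Nonempty := nonempty_range_iff.mpr ha.pos.ne'
  have lower_le_upper : ∀ k < N, ∀ i < N, a (k + 1) - c k ≤ a i + 1 - c (i + 1) := by
    intro k hk i hi
    rcases lt_trichotomy k i with h | rfl | h
    · linarith [ha.mono (Nat.succ_le_of_lt h), hc.le_one hi, hc.nonneg k]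
    · linarith [hS k hk]
    · linarith [hc.mono (Nat.succ_le_of_lt h), ha.le_one hk, ha.nonneg i]
  refine ⟨(range N).sup' hne fun k => a (k + 1) - c k, ?_, ?_, fun i hi => ⟨?_, ?_⟩⟩
  · refine le_trans ?_ (le_sup' (fun k => a (k + 1) - c k) (mem_range.mpr ha.pos))
    linarith [ha.nonneg 1, hc.zero]
  · refine sup'_le _ _ fun k hk => ?_
    linarith [ha.le_one (mem_range.mp hk), hc.nonneg k]
  · linarith [le_sup' (fun k => a (k + 1) - c k) (mem_range.mpr hi)]
  · have := sup'_le hne _ fun k hk => lower_le_upper k (mem_range.mp hk) i hi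
    linarith

section cumSum

variable {N : ℕ}

def cumSum (A : Fin N → ℝ) (m : ℕ) : ℝ :=
  ∑ k ∈ range m, if h : k < N then A ⟨k, h⟩ else 0

lemma cumSum_succ (A : Fin N → ℝ) (i : Fin N) : cumSum A (i + 1) - cumSum A i = A i := by
  rw [cumSum, cumSum, sum_range_succ, dif_pos i.isLt]
  ring

lemma isCDF_cumSum {A : Fin N → ℝ} (hA0 : ∀ i, 0 ≤ A i) (hA1 : ∑ i, A i = 1) :
    IsCDF (cumSum A) N where
  mono := monotone_nat_of_le_succ fun m => by
    rw [cumSum, cumSum, sum_range_succ, le_add_iff_nonneg_right]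
    split_ifs
    exacts [hA0 _, le_rfl]
  zero := sum_range_zero _
  eq_one := by rw [cumSum, sum_range, ← hA1]; exact sum_congr rfl fun i _ => dif_pos i.isLt

end cumSum

theorem zero_loss_exists_general (N : ℕ) (A B : Fin N → ℝ)
    (hA0 : ∀ i, 0 ≤ A i) (hB0 : ∀ i, 0 ≤ B i)
    (hA1 : ∑ i, A i = 1) (hB1 : ∑ i, B i = 1)
    (hS : ∀ i, A i + B i ≤ 1) :
    ∃ P : Fin N → Fin N → ℝ,
      (∀ i j, 0 ≤ P i j) ∧ (∀ i, P i i = 0) ∧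
      (∑ i, ∑ j, P i j = 1) ∧
      (∀ i, ∑ j, P i j = A i) ∧ (∀ j, ∑ i, P i j = B j) := by
  have ha := isCDF_cumSum hA0 hA1
  have hc := isCDF_cumSum hB0 hB1
  obtain ⟨θ, hθ₀, hθ₁, hθ⟩ := exists_rotation ha hc fun k hk => by
    simpa only [cumSum_succ _ ⟨k, hk⟩] using hS ⟨k, hk⟩
  have hrow (i : Fin N) : ∑ j : Fin N, circularCoupling (cumSum A) (cumSum B) θ i j = A i := by
    rw [Fin.sum_univ_eq_sum_range (circularCoupling _ _ θ i),
      sum_circularCoupling_row ha hc hθ₀ hθ₁ i.isLt, cumSum_succ]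
  refine ⟨fun i j => circularCoupling (cumSum A) (cumSum B) θ i j,
    fun i j => circularCoupling_nonneg i j,
    fun i => circularCoupling_self i (hθ i i.isLt).1 (hθ i i.isLt).2,
    by simp only [hrow, hA1], hrow, fun j => ?_⟩
  rw [Fin.sum_univ_eq_sum_range (circularCoupling _ _ θ · j),
    sum_circularCoupling_col ha hc hθ₀ hθ₁ j.isLt, cumSum_succ]

/-- If all popularities `A i + B i` are at most 1, there is a joint selection
probability matrix with zero diagonal, nonnegative entries, total sum 1,
row sums `A` and column sums `B`. -/
theorem zero_loss_exists (N : ℕ) (hN : 2 ≤ N) (A B : Fin N → ℝ)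
    (hA0 : ∀ i, 0 ≤ A i) (hB0 : ∀ i, 0 ≤ B i)
    (hA1 : ∑ i, A i = 1) (hB1 : ∑ i, B i = 1)
    (hS : ∀ i, A i + B i ≤ 1) :
    ∃ P : Fin N → Fin N → ℝ,
      (∀ i j, 0 ≤ P i j) ∧ (∀ i, P i i = 0) ∧
      (∑ i, ∑ j, P i j = 1) ∧
      (∀ i, ∑ j, P i j = A i) ∧ (∀ j, ∑ i, P i j = B j) :=
  zero_loss_exists_general N A B hA0 hB0 hA1 hB1 hS
end

section
/- If the popularity of the last option S_N = A_N + B_N is strictly greater than 1, then no joint selection probability matrix (nonnegative, zero diagonal, entries summing to 1) can achieve zero loss; i.e., it is impossible to have simultaneously row sums equal to A and column sums equal to B. -/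
open Finset

/-- Row `k` and column `k` meet only in the vanishing entry `(k, k)`. -/
theorem sum_row_add_sum_col_le_sum {ι M : Type*} [Fintype ι] [DecidableEq ι]
    [AddCommMonoid M] [PartialOrder M] [IsOrderedAddMonoid M]
    (P : ι → ι → M) (hP : ∀ i j, 0 ≤ P i j) (k : ι) (hk : P k k = 0) :
    ∑ j, P k j + ∑ i, P i k ≤ ∑ i, ∑ j, P i j := by
  have hcol : ∑ i, P i k = ∑ i ∈ univ.erase k, P i k := by
    rw [← add_sum_erase _ _ (mem_univ k), hk, zero_add]
  have hcol_le : ∑ i ∈ univ.erase k, P i k ≤ ∑ i ∈ univ.erase k, ∑ j, P i j :=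
    sum_le_sum fun i _ => single_le_sum (fun j _ => hP i j) (mem_univ k)
  calc ∑ j, P k j + ∑ i, P i k
      ≤ ∑ j, P k j + ∑ i ∈ univ.erase k, ∑ j, P i j := by
        rw [hcol]; gcongr
    _ = ∑ i, ∑ j, P i j := add_sum_erase _ (fun i => ∑ j, P i j) (mem_univ k)

theorem no_zero_loss_of_popular_general (n : ℕ) (A B : Fin (n + 2) → ℝ)
    (hS : 1 < A (Fin.last (n + 1)) + B (Fin.last (n + 1))) :
    ¬ ∃ P : Fin (n + 2) → Fin (n + 2) → ℝ,
        (∀ i j, 0 ≤ P i j) ∧ (∀ i, P i i = 0) ∧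
        (∑ i, ∑ j, P i j = 1) ∧
        (∀ i, ∑ j, P i j = A i) ∧ (∀ j, ∑ i, P i j = B j) := by
  rintro ⟨P, hP0, hPdiag, hPsum, hrow, hcol⟩
  have h := sum_row_add_sum_col_le_sum P hP0 (Fin.last (n + 1)) (hPdiag _)
  rw [hrow, hcol, hPsum] at h
  exact h.not_gt hS

/-- If the popularity of the last option exceeds 1, no joint selection
probability matrix (nonnegative, zero diagonal, total sum 1) has row sums `A`
and column sums `B` simultaneously. -/
theorem no_zero_loss_of_popular (n : ℕ) (A B : Fin (n + 2) → ℝ)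
    (hA0 : ∀ i, 0 ≤ A i) (hB0 : ∀ i, 0 ≤ B i)
    (hA1 : ∑ i, A i = 1) (hB1 : ∑ i, B i = 1)
    (hS : 1 < A (Fin.last (n + 1)) + B (Fin.last (n + 1))) :
    ¬ ∃ P : Fin (n + 2) → Fin (n + 2) → ℝ,
        (∀ i j, 0 ≤ P i j) ∧ (∀ i, P i i = 0) ∧
        (∑ i, ∑ j, P i j = 1) ∧
        (∀ i, ∑ j, P i j = A i) ∧ (∀ j, ∑ i, P i j = B j) :=
  no_zero_loss_of_popular_general n A B hS
end

section
/- Suppose S_N = A_N + B_N > 1 and S_N = max_i (A_i + B_i). Define ε = (S_N − 1)/(2(N−1)) and let P̃ have last column entries A_i + ε for i < N, last row entries B_j + ε for j < N, and all other entries (including the diagonal) zero. Then P̃ is a valid joint selection probability matrix (nonnegative entries, zero diagonal, total sum 1) and its loss equals N(S_N − 1)²/(2(N−1)). -/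
/-! The matrix is supported on the last row and column, so every row and column other than the
last has sum `A i + ε` (resp. `B j + ε`) and contributes `ε²` to the loss, while the last row sums
to `1 - B_N + (N - 1) ε` and the last column to `1 - A_N + (N - 1) ε`. The choice of `ε` makes
`S_N - 1 = 2 (N - 1) ε`, so both of these miss their targets by exactly `(N - 1) ε`; the loss is
therefore `2 (N - 1) ε² + 2 (N - 1)² ε² = N (S_N - 1)² / (2 (N - 1))`, and the total mass is
`2 - S_N + 2 (N - 1) ε = 1`. -/

open Finset

section HubMatrix

variable {ι R : Type*} [DecidableEq ι] (k : ι)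

def hubMatrix [Zero R] (a b : ι → R) (i j : ι) : R :=
  if i ≠ k ∧ j = k then a i else if i = k ∧ j ≠ k then b j else 0

variable {k}

theorem hubMatrix_self [Zero R] (a b : ι → R) (i : ι) : hubMatrix k a b i i = 0 := by
  simp [hubMatrix]

theorem hubMatrix_swap [Zero R] (a b : ι → R) (i j : ι) :
    hubMatrix k b a j i = hubMatrix k a b i j := by
  unfold hubMatrix
  by_cases hi : i = k <;> by_cases hj : j = k <;> simp [hi, hj]

theorem hubMatrix_nonneg [Zero R] [Preorder R] {a b : ι → R} (ha : ∀ i, 0 ≤ a i)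
    (hb : ∀ j, 0 ≤ b j) (i j : ι) : 0 ≤ hubMatrix k a b i j := by
  unfold hubMatrix
  split_ifs
  exacts [ha i, hb j, le_rfl]

variable [Fintype ι] [AddCommMonoid R] (a b : ι → R)

theorem sum_hubMatrix_row_of_ne {i : ι} (hi : i ≠ k) : ∑ j, hubMatrix k a b i j = a i := by
  simp [hubMatrix, hi]

theorem sum_hubMatrix_row_self : ∑ j, hubMatrix k a b k j = ∑ j ∈ univ.erase k, b j := by
  rw [← filter_ne', sum_filter]
  simp [hubMatrix]

theorem sum_hubMatrix_col_of_ne {j : ι} (hj : j ≠ k) : ∑ i, hubMatrix k a b i j = b j := by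
  simp_rw [← hubMatrix_swap a b]
  exact sum_hubMatrix_row_of_ne b a hj

theorem sum_hubMatrix_col_self : ∑ i, hubMatrix k a b i k = ∑ i ∈ univ.erase k, a i := by
  simp_rw [← hubMatrix_swap a b]
  exact sum_hubMatrix_row_self b a

theorem sum_sum_hubMatrix :
    ∑ i, ∑ j, hubMatrix k a b i j = ∑ i ∈ univ.erase k, a i + ∑ j ∈ univ.erase k, b j := by
  rw [← add_sum_erase _ _ (mem_univ k), sum_hubMatrix_row_self, add_comm]
  congr 1
  exact sum_congr rfl fun i hi => sum_hubMatrix_row_of_ne a b (ne_of_mem_erase hi)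

end HubMatrix

section RealSums

variable {ι : Type*} [Fintype ι] [DecidableEq ι]

theorem sum_erase_add_const (f : ι → ℝ) (k : ι) (c : ℝ) :
    ∑ i ∈ univ.erase k, (f i + c) = ∑ i, f i - f k + (Fintype.card ι - 1) * c := by
  rw [sum_erase_eq_sub (mem_univ k), sum_add_distrib, sum_const, card_univ, nsmul_eq_mul]
  ring

theorem sum_eq_of_eq_const_of_ne {f : ι → ℝ} {k : ι} {c : ℝ} (h : ∀ i ≠ k, f i = c) :
    ∑ i, f i = f k + (Fintype.card ι - 1) * c := by
  rw [← add_sum_erase _ _ (mem_univ k),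
    sum_congr rfl fun i hi => h i (ne_of_mem_erase hi), sum_erase_eq_sub (mem_univ k),
    sum_const, card_univ, nsmul_eq_mul]
  ring

end RealSums

theorem tilde_P_valid_and_loss_general (n : ℕ) (A B : Fin (n + 2) → ℝ)
    (hA0 : ∀ i, 0 ≤ A i) (hB0 : ∀ i, 0 ≤ B i)
    (hA1 : ∑ i, A i = 1) (hB1 : ∑ i, B i = 1)
    (hS : 1 < A (Fin.last (n + 1)) + B (Fin.last (n + 1)))
    (ε : ℝ)
    (hε : ε = (A (Fin.last (n + 1)) + B (Fin.last (n + 1)) - 1) /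
      (2 * ((n : ℝ) + 1)))
    (P : Fin (n + 2) → Fin (n + 2) → ℝ)
    (hP : ∀ i j, P i j =
      if i ≠ Fin.last (n + 1) ∧ j = Fin.last (n + 1) then A i + ε
      else if i = Fin.last (n + 1) ∧ j ≠ Fin.last (n + 1) then B j + ε
      else 0) :
    (∀ i j, 0 ≤ P i j) ∧ (∀ i, P i i = 0) ∧ (∑ i, ∑ j, P i j = 1) ∧
    (∑ i, (∑ j, P i j - A i) ^ 2 + ∑ j, (∑ i, P i j - B j) ^ 2 =
      ((n : ℝ) + 2) * (A (Fin.last (n + 1)) + B (Fin.last (n + 1)) - 1) ^ 2 /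
        (2 * ((n : ℝ) + 1))) := by
  set L := Fin.last (n + 1)
  have hPL : P = hubMatrix L (A · + ε) (B · + ε) := funext₂ hP
  have hcard : (Fintype.card (Fin (n + 2)) : ℝ) - 1 = n + 1 := by
    rw [Fintype.card_fin]; push_cast; ring
  have hεS : A L + B L - 1 = 2 * (n + 1) * ε := by rw [hε]; field_simp
  have hε0 : 0 ≤ ε := by nlinarith
  have hrow := sum_eq_of_eq_const_of_ne (k := L) (f := fun i => (∑ j, P i j - A i) ^ 2)
    fun i hi => by rw [hPL, sum_hubMatrix_row_of_ne _ _ hi, add_sub_cancel_left]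
  have hcol := sum_eq_of_eq_const_of_ne (k := L) (f := fun j => (∑ i, P i j - B j) ^ 2)
    fun j hj => by rw [hPL, sum_hubMatrix_col_of_ne _ _ hj, add_sub_cancel_left]
  simp only [hPL, sum_hubMatrix_row_self, sum_hubMatrix_col_self, sum_erase_add_const, hcard,
    hA1, hB1] at hrow hcol
  subst hPL
  refine ⟨hubMatrix_nonneg (fun i => by linarith [hA0 i]) (fun j => by linarith [hB0 j]),
    hubMatrix_self _ _, ?_, ?_⟩
  · rw [sum_sum_hubMatrix, sum_erase_add_const, sum_erase_add_const, hcard, hA1, hB1]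
    linarith
  · rw [hrow, hcol, hε]
    field_simp
    ring

/-- The explicit matrix `P̃` (with last column `A i + ε`, last row `B j + ε`,
zeros elsewhere) is a valid joint selection probability matrix and its loss
equals `N (S_N - 1)^2 / (2 (N - 1))`. -/
theorem tilde_P_valid_and_loss (n : ℕ) (A B : Fin (n + 2) → ℝ)
    (hA0 : ∀ i, 0 ≤ A i) (hB0 : ∀ i, 0 ≤ B i)
    (hA1 : ∑ i, A i = 1) (hB1 : ∑ i, B i = 1)
    (hS : 1 < A (Fin.last (n + 1)) + B (Fin.last (n + 1)))
    (hmax : ∀ i, A i + B i ≤ A (Fin.last (n + 1)) + B (Fin.last (n + 1)))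
    (ε : ℝ)
    (hε : ε = (A (Fin.last (n + 1)) + B (Fin.last (n + 1)) - 1) /
      (2 * ((n : ℝ) + 1)))
    (P : Fin (n + 2) → Fin (n + 2) → ℝ)
    (hP : ∀ i j, P i j =
      if i ≠ Fin.last (n + 1) ∧ j = Fin.last (n + 1) then A i + ε
      else if i = Fin.last (n + 1) ∧ j ≠ Fin.last (n + 1) then B j + ε
      else 0) :
    (∀ i j, 0 ≤ P i j) ∧ (∀ i, P i i = 0) ∧ (∑ i, ∑ j, P i j = 1) ∧
    (∑ i, (∑ j, P i j - A i) ^ 2 + ∑ j, (∑ i, P i j - B j) ^ 2 =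
      ((n : ℝ) + 2) * (A (Fin.last (n + 1)) + B (Fin.last (n + 1)) - 1) ^ 2 /
        (2 * ((n : ℝ) + 1))) :=
  tilde_P_valid_and_loss_general n A B hA0 hB0 hA1 hB1 hS ε hε P hP
end

section
/- For any joint selection probability matrix P (nonnegative, zero diagonal, total sum 1), if S_N = A_N + B_N > 1 then the loss satisfies L(P) ≥ N(S_N − 1)²/(2(N−1)). -/
/-!
Write `x i = ∑ j, P i j - A i` and `y j = ∑ i, P i j - B j` for the row and column residuals;
both sum to zero. Because the diagonal of `P` vanishes, row `N` and column `N` share no entry, so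
their total mass is at most `1` and `x N + y N ≤ 1 - S_N < 0`. A zero-sum vector on `N` coordinates
satisfies `N x_k² ≤ (N - 1) ∑ x_i²` (Cauchy–Schwarz on the other `N - 1` coordinates), and
`(x N + y N)² ≤ 2 (x N² + y N²)` finishes the estimate.
-/

open Finset

section ZeroSum

variable {ι : Type*} [Fintype ι]

theorem card_mul_sq_le_of_sum_eq_zero {f : ι → ℝ} (hf : ∑ i, f i = 0) (k : ι) :
    Fintype.card ι * f k ^ 2 ≤ (Fintype.card ι - 1) * ∑ i, f i ^ 2 := by
  classical
  have hk : k ∈ (univ : Finset ι) := mem_univ k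
  have hcard : ((univ.erase k).card : ℝ) = Fintype.card ι - 1 := by
    rw [card_erase_of_mem hk, Nat.cast_pred (card_pos.2 ⟨k, hk⟩), card_univ]
  have hrest : ∑ i ∈ univ.erase k, f i = -f k := by
    rw [sum_erase_eq_sub hk, hf, zero_sub]
  have hcs := sq_sum_le_card_mul_sum_sq (s := univ.erase k) (f := f)
  rw [hrest, hcard, neg_sq] at hcs
  rw [← add_sum_erase _ (fun i => f i ^ 2) hk]
  linarith

theorem card_mul_sq_add_le_of_sum_eq_zero {x y : ι → ℝ} (hx : ∑ i, x i = 0)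
    (hy : ∑ i, y i = 0) (k : ι) :
    Fintype.card ι * (x k + y k) ^ 2 ≤
      2 * (Fintype.card ι - 1) * (∑ i, x i ^ 2 + ∑ i, y i ^ 2) := by
  have hx' := card_mul_sq_le_of_sum_eq_zero hx k
  have hy' := card_mul_sq_le_of_sum_eq_zero hy k
  calc (Fintype.card ι : ℝ) * (x k + y k) ^ 2
      ≤ Fintype.card ι * (2 * (x k ^ 2 + y k ^ 2)) := by gcongr; exact add_sq_le
    _ ≤ 2 * (Fintype.card ι - 1) * (∑ i, x i ^ 2 + ∑ i, y i ^ 2) := by linarith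

end ZeroSum

theorem sum_row_add_sum_col_le_sum_of_diag_eq_zero {ι : Type*} [Fintype ι] [DecidableEq ι]
    {P : ι → ι → ℝ} (hP0 : ∀ i j, 0 ≤ P i j) {k : ι} (hPk : P k k = 0) :
    ∑ j, P k j + ∑ i, P i k ≤ ∑ i, ∑ j, P i j := by
  have hk : k ∈ (univ : Finset ι) := mem_univ k
  have hcol : ∑ i ∈ univ.erase k, P i k ≤ ∑ i ∈ univ.erase k, ∑ j, P i j :=
    sum_le_sum fun i _ => single_le_sum (fun j _ => hP0 i j) hk
  rw [← add_sum_erase _ (fun i => ∑ j, P i j) hk, ← add_sum_erase _ (fun i => P i k) hk, hPk]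
  linarith

theorem loss_lower_bound_general (n : ℕ) (A B : Fin (n + 2) → ℝ)
    (hA1 : ∑ i, A i = 1) (hB1 : ∑ i, B i = 1)
    (hS : 1 < A (Fin.last (n + 1)) + B (Fin.last (n + 1)))
    (P : Fin (n + 2) → Fin (n + 2) → ℝ)
    (hP0 : ∀ i j, 0 ≤ P i j) (hPd : ∀ i, P i i = 0)
    (hP1 : ∑ i, ∑ j, P i j = 1) :
    ((n : ℝ) + 2) * (A (Fin.last (n + 1)) + B (Fin.last (n + 1)) - 1) ^ 2 /
        (2 * ((n : ℝ) + 1)) ≤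
      ∑ i, (∑ j, P i j - A i) ^ 2 + ∑ j, (∑ i, P i j - B j) ^ 2 := by
  set L := Fin.last (n + 1)
  set x : Fin (n + 2) → ℝ := fun i => ∑ j, P i j - A i
  set y : Fin (n + 2) → ℝ := fun j => ∑ i, P i j - B j
  have hx : ∑ i, x i = 0 := by simp only [x, sum_sub_distrib, hP1, hA1, sub_self]
  have hy : ∑ j, y j = 0 := by
    simp only [y, sum_sub_distrib, hB1]
    rw [sum_comm, hP1, sub_self]
  have hxyL : x L + y L ≤ 1 - (A L + B L) := by
    have := sum_row_add_sum_col_le_sum_of_diag_eq_zero hP0 (hPd L)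
    simp only [x, y]
    linarith
  have hsq : (A L + B L - 1) ^ 2 ≤ (x L + y L) ^ 2 := by nlinarith
  have hbound := card_mul_sq_add_le_of_sum_eq_zero hx hy L
  simp only [Fintype.card_fin, Nat.cast_add, Nat.cast_ofNat] at hbound
  rw [div_le_iff₀ (by positivity)]
  nlinarith

/-- Lower bound on the loss of any joint selection probability matrix when the
popularity of the last option exceeds 1. -/
theorem loss_lower_bound (n : ℕ) (A B : Fin (n + 2) → ℝ)
    (hA0 : ∀ i, 0 ≤ A i) (hB0 : ∀ i, 0 ≤ B i)
    (hA1 : ∑ i, A i = 1) (hB1 : ∑ i, B i = 1)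
    (hS : 1 < A (Fin.last (n + 1)) + B (Fin.last (n + 1)))
    (P : Fin (n + 2) → Fin (n + 2) → ℝ)
    (hP0 : ∀ i j, 0 ≤ P i j) (hPd : ∀ i, P i i = 0)
    (hP1 : ∑ i, ∑ j, P i j = 1) :
    ((n : ℝ) + 2) * (A (Fin.last (n + 1)) + B (Fin.last (n + 1)) - 1) ^ 2 /
        (2 * ((n : ℝ) + 1)) ≤
      ∑ i, (∑ j, P i j - A i) ^ 2 + ∑ j, (∑ i, P i j - B j) ^ 2 :=
  loss_lower_bound_general n A B hA1 hB1 hS P hP0 hPd hP1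
end

section
/- (Pure HOM optimality for N = 3.) Let N = 3 and suppose both players have the same preference A with A_i > 0, ∑ A_i = 1, and 2A_i < 1 for each i. Let θ₁, θ₂, θ₃ be phases with sin((θ_i − θ_j)/2) ≠ 0 for i ≠ j, and choose amplitudes a_i² proportional to sin²((θ_j − θ_k)/2)/(1 − 2A_i) where {i,j,k} = {1,2,3}. Define r_{i,j} = a_i² a_j² sin²((θ_i − θ_j)/2) and p_{i,j} = r_{i,j} / ∑_{k,l} r_{k,l}. Then the row sums of p satisfy ∑_j p_{i,j} = A_i for each i (and by symmetry the column sums also equal A_i), so the loss is zero. -/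
/-!
Write `dᵢ = 1 - 2Aᵢ` and `sᵢ = sin ((θⱼ - θₖ) / 2)` for `(i, j, k)` cyclic. Each off-diagonal
entry is `rᵢⱼ = αᵢ αⱼ sₖ² = K / (dᵢ dⱼ)` with `K = C² s₀² s₁² s₂²`, so row `i` sums to
`K (dⱼ + dₖ) / (d₀ d₁ d₂)`. Since `∑ Aᵢ = 1` we have `dⱼ + dₖ = 2Aᵢ`: every row sum of `r`
is the same multiple of `Aᵢ`, and normalizing by the total leaves exactly `Aᵢ`.
-/

open Finset Real

theorem sum_div_sum_sum_of_sum_eq_mul {ι : Type*} [Fintype ι] {r : ι → ι → ℝ} {A : ι → ℝ}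
    {c : ℝ} (hc : c ≠ 0) (hA : ∑ i, A i = 1) (hrow : ∀ i, ∑ j, r i j = c * A i) (i : ι) :
    ∑ j, r i j / ∑ k, ∑ l, r k l = A i := by
  rw [← sum_div, hrow]
  simp_rw [hrow]
  rw [← mul_sum, hA, mul_one, mul_div_cancel_left₀ _ hc]

theorem Fin.sum_ite_inv_mul_three (d : Fin 3 → ℝ) (hd : ∀ i, d i ≠ 0) (i : Fin 3) :
    ∑ j, (if i = j then 0 else (d i * d j)⁻¹) = (∑ k, d k - d i) / ∏ k, d k := by
  have := hd 0; have := hd 1; have := hd 2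
  fin_cases i <;> simp [Fin.sum_univ_three, Fin.prod_univ_three] <;> field_simp <;> ring

theorem mul_mul_sin_sq_half_sub_fin_three (θ d α : Fin 3 → ℝ) (C : ℝ)
    (hα : ∀ i, α i = C * sin ((θ (i + 1) - θ (i + 2)) / 2) ^ 2 / d i) (i j : Fin 3) :
    α i * α j * sin ((θ i - θ j) / 2) ^ 2 =
      C ^ 2 * (∏ k, sin ((θ (k + 1) - θ (k + 2)) / 2) ^ 2) *
        (if i = j then 0 else (d i * d j)⁻¹) := by
  have sin_sq_comm : ∀ a b : ℝ, sin ((b - a) / 2) ^ 2 = sin ((a - b) / 2) ^ 2 := fun a b => by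
    rw [← neg_sub, neg_div, sin_neg, neg_sq]
  fin_cases i <;> fin_cases j <;>
    simp [hα, Fin.prod_univ_three, sin_sq_comm (θ 0) (θ 1), sin_sq_comm (θ 1) (θ 2),
      sin_sq_comm (θ 2) (θ 0)] <;> ring

theorem pure_hom_three_options_general (A : Fin 3 → ℝ) (θ : Fin 3 → ℝ)
    (hA1 : A 0 + A 1 + A 2 = 1)
    (hAhalf : ∀ i, A i < 1 / 2)
    (hθ : ∀ i j : Fin 3, i ≠ j → Real.sin ((θ i - θ j) / 2) ≠ 0)
    (C : ℝ) (hC : 0 < C) (α : Fin 3 → ℝ)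
    (hα0 : α 0 = C * Real.sin ((θ 1 - θ 2) / 2) ^ 2 / (1 - 2 * A 0))
    (hα1 : α 1 = C * Real.sin ((θ 2 - θ 0) / 2) ^ 2 / (1 - 2 * A 1))
    (hα2 : α 2 = C * Real.sin ((θ 0 - θ 1) / 2) ^ 2 / (1 - 2 * A 2))
    (r : Fin 3 → Fin 3 → ℝ)
    (hr : ∀ i j, r i j = α i * α j * Real.sin ((θ i - θ j) / 2) ^ 2)
    (p : Fin 3 → Fin 3 → ℝ)
    (hp : ∀ i j, p i j = r i j / (∑ k, ∑ l, r k l)) :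
    ∀ i, ∑ j, p i j = A i := by
  set d : Fin 3 → ℝ := fun i => 1 - 2 * A i
  have hd : ∀ i, d i ≠ 0 := fun i => by have := hAhalf i; simp only [d]; linarith
  have hα : ∀ i, α i = C * sin ((θ (i + 1) - θ (i + 2)) / 2) ^ 2 / d i := by
    intro i; fin_cases i
    exacts [hα0, hα1, hα2]
  set K := C ^ 2 * ∏ k, sin ((θ (k + 1) - θ (k + 2)) / 2) ^ 2
  have hK : K ≠ 0 := by
    refine mul_ne_zero (pow_ne_zero _ hC.ne') (prod_ne_zero_iff.2 fun k _ => pow_ne_zero _ ?_)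
    exact hθ _ _ (by fin_cases k <;> decide)
  have hA : ∑ i, A i = 1 := by rwa [Fin.sum_univ_three]
  have hrow : ∀ i, ∑ j, r i j = 2 * K / (∏ k, d k) * A i := by
    intro i
    have hd_sum : ∑ k, d k = 1 := by simp only [d, Fin.sum_univ_three]; linarith
    simp_rw [hr, mul_mul_sin_sq_half_sub_fin_three θ d α C hα, ← mul_sum,
      Fin.sum_ite_inv_mul_three d hd, hd_sum, d]
    ring
  intro i
  simp_rw [hp]
  exact sum_div_sum_sum_of_sum_eq_mul
    (div_ne_zero (mul_ne_zero two_ne_zero hK) (prod_ne_zero_iff.2 fun k _ => hd k)) hA hrow i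

/-- Pure HOM optimality for `N = 3`: with the prescribed amplitude choice,
the row sums of the normalized joint selection matrix equal the common
preference `A`. -/
theorem pure_hom_three_options (A : Fin 3 → ℝ) (θ : Fin 3 → ℝ)
    (hApos : ∀ i, 0 < A i) (hA1 : A 0 + A 1 + A 2 = 1)
    (hAhalf : ∀ i, A i < 1 / 2)
    (hθ : ∀ i j : Fin 3, i ≠ j → Real.sin ((θ i - θ j) / 2) ≠ 0)
    (C : ℝ) (hC : 0 < C) (α : Fin 3 → ℝ)
    (hα0 : α 0 = C * Real.sin ((θ 1 - θ 2) / 2) ^ 2 / (1 - 2 * A 0))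
    (hα1 : α 1 = C * Real.sin ((θ 2 - θ 0) / 2) ^ 2 / (1 - 2 * A 1))
    (hα2 : α 2 = C * Real.sin ((θ 0 - θ 1) / 2) ^ 2 / (1 - 2 * A 2))
    (r : Fin 3 → Fin 3 → ℝ)
    (hr : ∀ i j, r i j = α i * α j * Real.sin ((θ i - θ j) / 2) ^ 2)
    (p : Fin 3 → Fin 3 → ℝ)
    (hp : ∀ i j, p i j = r i j / (∑ k, ∑ l, r k l)) :
    ∀ i, ∑ j, p i j = A i :=
  pure_hom_three_options_general A θ hA1 hAhalf hθ C hC α hα0 hα1 hα2 r hr p hp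
end

section
/- Under the N = 3 Pure HOM amplitude choice, the unnormalized satisfied preference satisfies π̂(1) := r_{1,2} + r_{1,3} = 2T a₁² a₂² a₃² A₁, where T = ∑_i sin²((θ_j − θ_k)/2)/(1 − 2A_i) (sum over cyclic triples). -/
/-! The normalisation `α 0 + α 1 + α 2 = 1` says exactly `C * T = 1`, and the amplitude choice says
`C * sin² ((θ j - θ k) / 2) = α i * (1 - 2 * A i)`. Multiplying `r 0 1 + r 0 2` by `C * T = 1` therefore
turns it into `T * α 0 * α 1 * α 2 * ((1 - 2 * A 1) + (1 - 2 * A 2))`, and `1 - A 1 - A 2 = A 0`. -/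

lemma sin_sq_half_sub_comm (x y : ℝ) : Real.sin ((x - y) / 2) ^ 2 = Real.sin ((y - x) / 2) ^ 2 := by
  rw [← neg_sub, neg_div, Real.sin_neg, neg_sq]

lemma mul_mul_add_mul_mul_eq_of_mul_eq_one {R : Type*} [CommRing R] {C T a₀ a₁ a₂ s₁ s₂ d₁ d₂ : R}
    (hCT : C * T = 1) (h₁ : C * s₁ = a₁ * d₁) (h₂ : C * s₂ = a₂ * d₂) :
    a₀ * a₁ * s₂ + a₀ * a₂ * s₁ = T * (a₀ * a₁ * a₂) * (d₁ + d₂) := by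
  linear_combination (-(a₀ * a₁ * s₂ + a₀ * a₂ * s₁)) * hCT + T * a₀ * a₂ * h₁ + T * a₀ * a₁ * h₂

theorem pure_hom_unnormalized_general (A : Fin 3 → ℝ) (θ : Fin 3 → ℝ)
    (hA1 : A 0 + A 1 + A 2 = 1) (hAhalf : ∀ i, A i < 1 / 2)
    (C : ℝ) (α : Fin 3 → ℝ)
    (hα0 : α 0 = C * Real.sin ((θ 1 - θ 2) / 2) ^ 2 / (1 - 2 * A 0))
    (hα1 : α 1 = C * Real.sin ((θ 2 - θ 0) / 2) ^ 2 / (1 - 2 * A 1))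
    (hα2 : α 2 = C * Real.sin ((θ 0 - θ 1) / 2) ^ 2 / (1 - 2 * A 2))
    (hnorm : α 0 + α 1 + α 2 = 1)
    (r : Fin 3 → Fin 3 → ℝ)
    (hr : ∀ i j, r i j = α i * α j * Real.sin ((θ i - θ j) / 2) ^ 2)
    (T : ℝ)
    (hT : T = Real.sin ((θ 1 - θ 2) / 2) ^ 2 / (1 - 2 * A 0)
        + Real.sin ((θ 2 - θ 0) / 2) ^ 2 / (1 - 2 * A 1)
        + Real.sin ((θ 0 - θ 1) / 2) ^ 2 / (1 - 2 * A 2)) :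
    r 0 1 + r 0 2 = 2 * T * (α 0 * α 1 * α 2) * A 0 := by
  have hd : ∀ i, 1 - 2 * A i ≠ 0 := fun i ↦ (by linarith [hAhalf i] : (0 : ℝ) < 1 - 2 * A i).ne'
  have hCT : C * T = 1 := by
    rw [← hnorm, hT, hα0, hα1, hα2]
    ring
  have key := mul_mul_add_mul_mul_eq_of_mul_eq_one (a₀ := α 0) hCT
    ((eq_div_iff (hd 1)).mp hα1).symm ((eq_div_iff (hd 2)).mp hα2).symm
  rw [hr, hr, sin_sq_half_sub_comm (θ 0) (θ 2), key]
  linear_combination -2 * T * (α 0 * α 1 * α 2) * hA1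

/-- The unnormalized satisfied preference of the first option in the `N = 3`
Pure HOM construction equals `2 T a₁² a₂² a₃² A₁`. -/
theorem pure_hom_unnormalized (A : Fin 3 → ℝ) (θ : Fin 3 → ℝ)
    (hA1 : A 0 + A 1 + A 2 = 1) (hAhalf : ∀ i, A i < 1 / 2)
    (C : ℝ) (hC : 0 < C) (α : Fin 3 → ℝ)
    (hα0 : α 0 = C * Real.sin ((θ 1 - θ 2) / 2) ^ 2 / (1 - 2 * A 0))
    (hα1 : α 1 = C * Real.sin ((θ 2 - θ 0) / 2) ^ 2 / (1 - 2 * A 1))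
    (hα2 : α 2 = C * Real.sin ((θ 0 - θ 1) / 2) ^ 2 / (1 - 2 * A 2))
    (hnorm : α 0 + α 1 + α 2 = 1)
    (r : Fin 3 → Fin 3 → ℝ)
    (hr : ∀ i j, r i j = α i * α j * Real.sin ((θ i - θ j) / 2) ^ 2)
    (T : ℝ)
    (hT : T = Real.sin ((θ 1 - θ 2) / 2) ^ 2 / (1 - 2 * A 0)
        + Real.sin ((θ 2 - θ 0) / 2) ^ 2 / (1 - 2 * A 1)
        + Real.sin ((θ 0 - θ 1) / 2) ^ 2 / (1 - 2 * A 2)) :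
    r 0 1 + r 0 2 = 2 * T * (α 0 * α 1 * α 2) * A 0 :=
  pure_hom_unnormalized_general A θ hA1 hAhalf C α hα0 hα1 hα2 hnorm r hr T hT
end

section
/- For the usage rate U = ∑_{i,j} r_{i,j} in Pure HOM with symmetric amplitudes a_k = b_k, ∑_k a_k² = 1, we have U = ∑_{i,j} a_i² a_j² sin²((θ_i − θ_j)/2) ≤ 1/2, i.e., at most half of photon pairs can be used for conflict-free decisions. -/
/-! Since `sin² ((x - y) / 2) = (1 - cos (x - y)) / 2`, the usage rate is
`(1 - ∑ᵢⱼ aᵢ² aⱼ² cos (θᵢ - θⱼ)) / 2`, and the double cosine sum is the squared length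
`(∑ₖ aₖ² cos θₖ)² + (∑ₖ aₖ² sin θₖ)²` of the weighted resultant of the unit vectors at angles `θₖ`,
hence nonnegative. -/

open Finset Real

section WeightedPhases

variable {ι : Type*} [Fintype ι] (w θ : ι → ℝ)

theorem sum_sum_mul_cos_sub_eq :
    ∑ i, ∑ j, w i * w j * cos (θ i - θ j)
      = (∑ k, w k * cos (θ k)) ^ 2 + (∑ k, w k * sin (θ k)) ^ 2 := by
  simp only [cos_sub, sq, sum_mul_sum, ← sum_add_distrib]
  refine sum_congr rfl fun i _ => sum_congr rfl fun j _ => ?_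
  ring

theorem sum_sum_mul_sin_sq_half_sub_eq :
    ∑ i, ∑ j, w i * w j * sin ((θ i - θ j) / 2) ^ 2
      = ((∑ k, w k) ^ 2 - ((∑ k, w k * cos (θ k)) ^ 2 + (∑ k, w k * sin (θ k)) ^ 2)) / 2 := by
  have hterm : ∀ i j, w i * w j * sin ((θ i - θ j) / 2) ^ 2
      = (w i * w j - w i * w j * cos (θ i - θ j)) / 2 := by
    intro i j
    rw [sin_sq_eq_half_sub, mul_div_cancel₀ _ two_ne_zero]
    ring
  simp only [hterm, ← sum_div, sum_sub_distrib]
  rw [sum_sum_mul_cos_sub_eq, ← sum_mul_sum, ← sq]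

theorem sum_sum_mul_sin_sq_half_sub_le :
    ∑ i, ∑ j, w i * w j * sin ((θ i - θ j) / 2) ^ 2 ≤ (∑ k, w k) ^ 2 / 2 := by
  rw [sum_sum_mul_sin_sq_half_sub_eq]
  gcongr
  exact sub_le_self _ (by positivity)

end WeightedPhases

/-- The Pure HOM usage rate with symmetric normalized amplitudes is at most
one half. -/
theorem usage_rate_le_half (N : ℕ) (a θ : Fin N → ℝ)
    (hnorm : ∑ k, (a k) ^ 2 = 1) :
    ∑ i, ∑ j, (a i) ^ 2 * (a j) ^ 2 * Real.sin ((θ i - θ j) / 2) ^ 2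
      ≤ 1 / 2 := by
  have h := sum_sum_mul_sin_sq_half_sub_le (fun k => a k ^ 2) θ
  rwa [hnorm, one_pow] at h
end
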